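/- For every ε ∈ (0,1) and dimension n there exists M > 1 such that: if w is a weight on ℝⁿ with the M-good doubling property, then for all s > 0 and all x, y ∈ ℝⁿ with |x − y| < s, (1+ε)⁻¹ ≤ (φ_s ∗ w)(y) / (χ̃_s ∗ w)(x) ≤ 1+ε, where φ(x) = π^{−n/2} e^{−|x|²} is the Gaussian and χ̃ is the L¹-normalized indicator of the unit ball. -/

import Mathlib

open MeasureTheory Metric Set Real Filter
noncomputable section

/-- `w` has the `M`-good doubling property: for all `x, R`, all `y ∈ B(x,R)` and all
`s, r ∈ [R/M, MR]`, `(1+1/M)⁻¹ ≤ [w(B(x,r))/w(B(y,s))]·(sⁿ/rⁿ) ≤ 1+1/M`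
(stated in multiplied-out form). -/
def GoodDoubling (n : ℕ) (M : ℝ) (w : EuclideanSpace ℝ (Fin n) → ℝ) : Prop :=
  ∀ (x : EuclideanSpace ℝ (Fin n)) (R : ℝ), 0 < R → ∀ y ∈ Metric.ball x R,
    ∀ r ∈ Set.Icc (R/M) (M*R), ∀ s ∈ Set.Icc (R/M) (M*R),
      (1+1/M)⁻¹ * (∫ z in Metric.ball y s, w z) * r^n ≤ (∫ z in Metric.ball x r, w z) * s^n ∧
      (∫ z in Metric.ball x r, w z) * s^n ≤ (1+1/M) * (∫ z in Metric.ball y s, w z) * r^n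

/-- The Gaussian kernel `φ(x) = π^{-n/2} e^{-|x|²}`. -/
def gauss (n : ℕ) (x : EuclideanSpace ℝ (Fin n)) : ℝ :=
  Real.pi ^ (-(n:ℝ)/2) * Real.exp (-‖x‖^2)

/-- `ψ = ∇φ`, the gradient of the Gaussian: `ψ(x) = -2 φ(x) x`. -/
def gaussGrad (n : ℕ) (x : EuclideanSpace ℝ (Fin n)) : EuclideanSpace ℝ (Fin n) :=
  (-2 * gauss n x) • x

/-- `(w ∗ φ_r)(x)` where `φ_r(x) = r⁻ⁿ φ(x/r)`; the heat extension of `w` at time `r²`. -/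
def heatConv (n : ℕ) (w : EuclideanSpace ℝ (Fin n) → ℝ) (r : ℝ)
    (x : EuclideanSpace ℝ (Fin n)) : ℝ :=
  ∫ z, (r^n)⁻¹ * gauss n (r⁻¹ • (x - z)) * w z

/-- `(w ∗ ψ_r)(x)` where `ψ_r(x) = r⁻ⁿ ψ(x/r)`. -/
def psiConv (n : ℕ) (w : EuclideanSpace ℝ (Fin n) → ℝ) (r : ℝ)
    (x : EuclideanSpace ℝ (Fin n)) : EuclideanSpace ℝ (Fin n) :=
  ∫ z, w z • ((r^n)⁻¹ • gaussGrad n (r⁻¹ • (x - z)))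

open scoped Topology ENNReal

/-!
Chaining about `log_{M²} max(√t, 1/√t)` applications of the doubling condition, each costing a
factor `1 + 1/M`, shows that `w(B(y, s√t))` and `t^{n/2} w(B(x, s))` agree up to the factor
`(1 + 1/M)² max(√t, 1/√t)^δ`, where `δ = log(1 + 1/M) / log M² → 0`. By the layer-cake formula
for the Gaussian, `sⁿ π^{n/2} (φ_s ∗ w)(y) = ∫₀^∞ e^{-t} w(B(y, s√t)) dt`, which therefore lies
between `(1 + 1/M)^{-2} I(-δ) w(B(x, s))` and `(1 + 1/M)² I(δ) w(B(x, s))`, where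
`I(δ) = ∫₀^∞ e^{-t} t^{n/2} max(√t, 1/√t)^δ dt`. By dominated convergence both `I(±δ)` tend to
`I(0) = Γ(n/2 + 1) = π^{n/2} / |B(0,1)|` as `M → ∞`.
-/

def WithinFactor (c a b : ℝ) : Prop := a ≤ c * b ∧ b ≤ c * a

namespace WithinFactor

variable {a b e c c' : ℝ}

theorem refl_one (a : ℝ) : WithinFactor 1 a a := by simp [WithinFactor]

theorem symm (h : WithinFactor c a b) : WithinFactor c b a := ⟨h.2, h.1⟩

theorem trans (h : WithinFactor c a b) (h' : WithinFactor c' b e) (hc : 0 ≤ c) (hc' : 0 ≤ c') :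
    WithinFactor (c * c') a e :=
  ⟨h.1.trans <| by nlinarith [h'.1], h'.2.trans <| by nlinarith [h.2]⟩

theorem inv_mul_le (h : WithinFactor c a b) (hc : 0 < c) : c⁻¹ * b ≤ a := by
  rw [inv_mul_le_iff₀ hc]
  exact h.2

theorem mono (h : WithinFactor c a b) (hcc' : c ≤ c') (ha : 0 ≤ a) (hb : 0 ≤ b) :
    WithinFactor c' a b :=
  ⟨h.1.trans (mul_le_mul_of_nonneg_right hcc' hb),
    h.2.trans (mul_le_mul_of_nonneg_right hcc' ha)⟩

theorem mul_right (h : WithinFactor c a b) {k : ℝ} (hk : 0 ≤ k) :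
    WithinFactor c (a * k) (b * k) :=
  ⟨by nlinarith [h.1], by nlinarith [h.2]⟩

end WithinFactor

theorem one_le_max_self_inv {x : ℝ} (hx : 0 < x) : 1 ≤ max x x⁻¹ := by
  rcases le_total 1 x with h | h
  · exact h.trans (le_max_left _ _)
  · exact ((one_le_inv₀ hx).2 h).trans (le_max_right _ _)

theorem sqrt_pow_eq_rpow {t : ℝ} (ht : 0 ≤ t) (n : ℕ) : √t ^ n = t ^ ((n : ℝ) / 2) := by
  rw [sqrt_eq_rpow, ← rpow_natCast, ← rpow_mul ht]
  ring_nf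

theorem pi_rpow_neg_natCast_div_two (n : ℕ) : π ^ (-(n : ℝ) / 2) = (√π ^ n)⁻¹ := by
  rw [sqrt_eq_rpow, ← rpow_natCast, ← rpow_mul pi_pos.le, ← rpow_neg pi_pos.le]
  ring_nf

theorem pow_natCeil_logb_le_mul_rpow {b B u : ℝ} (hb : 1 ≤ b) (hB : 1 < B) (hu : 1 ≤ u) :
    b ^ ⌈logb B u⌉₊ ≤ b * u ^ (log b / log B) := by
  have hb0 : 0 < b := one_pos.trans_le hb
  have hL : 0 ≤ logb B u := logb_nonneg hB hu
  calc b ^ ⌈logb B u⌉₊ = b ^ (⌈logb B u⌉₊ : ℝ) := (rpow_natCast b _).symm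
    _ ≤ b ^ (logb B u + 1) := rpow_le_rpow_of_exponent_le hb (Nat.ceil_lt_add_one hL).le
    _ = b * u ^ (log b / log B) := by
      rw [rpow_add hb0, rpow_one, mul_comm, rpow_def_of_pos hb0,
        rpow_def_of_pos (one_pos.trans_le hu), logb]
      ring_nf

theorem tendsto_one_add_one_div_atTop : Tendsto (fun M : ℝ => 1 + 1 / M) atTop (𝓝 1) := by
  simpa using tendsto_inv_atTop_zero.const_add (1 : ℝ)

section Doubling

variable {n : ℕ} {M : ℝ} {w : EuclideanSpace ℝ (Fin n) → ℝ}

def normalizedBallMass (w : EuclideanSpace ℝ (Fin n) → ℝ) (c : EuclideanSpace ℝ (Fin n))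
    (r : ℝ) : ℝ :=
  (∫ z in ball c r, w z) / r ^ n

theorem normalizedBallMass_nonneg (hw : ∀ x, 0 ≤ w x) (c : EuclideanSpace ℝ (Fin n)) {r : ℝ}
    (hr : 0 ≤ r) : 0 ≤ normalizedBallMass w c r :=
  div_nonneg (setIntegral_nonneg measurableSet_ball fun z _ => hw z) (pow_nonneg hr n)

theorem GoodDoubling.withinFactor (hM : 0 < M) (hGD : GoodDoubling n M w)
    {x y : EuclideanSpace ℝ (Fin n)} {R r s : ℝ} (hR : 0 < R) (hy : y ∈ ball x R)
    (hr : r ∈ Icc (R / M) (M * R)) (hs : s ∈ Icc (R / M) (M * R)) :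
    WithinFactor (1 + 1 / M) (normalizedBallMass w x r) (normalizedBallMass w y s) := by
  have hr0 : 0 < r ^ n := pow_pos ((div_pos hR hM).trans_le hr.1) n
  have hs0 : 0 < s ^ n := pow_pos ((div_pos hR hM).trans_le hs.1) n
  have hb : 0 < 1 + 1 / M := by positivity
  obtain ⟨hlo, hhi⟩ := hGD x R hR y hy r hr s hs
  unfold normalizedBallMass
  constructor
  · rw [div_le_iff₀ hr0, mul_div_assoc', div_mul_eq_mul_div, le_div_iff₀ hs0]
    linarith
  · rw [div_le_iff₀ hs0, mul_div_assoc', div_mul_eq_mul_div, le_div_iff₀ hr0]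
    rw [inv_mul_eq_div, div_mul_eq_mul_div, div_le_iff₀' hb] at hlo
    linarith

theorem GoodDoubling.withinFactor_of_le (hM : 1 < M) (hGD : GoodDoubling n M w)
    (c : EuclideanSpace ℝ (Fin n)) {r ρ : ℝ} (hρ : 0 < ρ) (hρr : ρ ≤ r)
    (hr : r ≤ M ^ 2 * ρ) :
    WithinFactor (1 + 1 / M) (normalizedBallMass w c r) (normalizedBallMass w c ρ) := by
  have hM0 : 0 < M := one_pos.trans hM
  have hMR : M * (r / M) = r := mul_div_cancel₀ r hM0.ne'
  have hlow : r / M / M ≤ ρ := by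
    rw [div_div, div_le_iff₀ (by positivity)]; linarith
  have hR : 0 < r / M := div_pos (hρ.trans_le hρr) hM0
  exact hGD.withinFactor (R := r / M) hM0 hR (mem_ball_self hR) ⟨hlow.trans hρr, hMR.ge⟩
    ⟨hlow, hMR.symm ▸ hρr⟩

theorem GoodDoubling.withinFactor_pow (hM : 1 < M) (hGD : GoodDoubling n M w)
    (c : EuclideanSpace ℝ (Fin n)) {s : ℝ} (hs : 0 < s) (k : ℕ) {ρ : ℝ} (hsρ : s ≤ ρ)
    (hρ : ρ ≤ (M ^ 2) ^ k * s) :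
    WithinFactor ((1 + 1 / M) ^ k) (normalizedBallMass w c ρ) (normalizedBallMass w c s) := by
  have hM2 : 1 ≤ M ^ 2 := one_le_pow₀ hM.le
  have hb : 0 ≤ 1 + 1 / M := by positivity
  induction k generalizing ρ with
  | zero =>
    rw [pow_zero, one_mul] at hρ
    rw [le_antisymm hρ hsρ, pow_zero]
    exact WithinFactor.refl_one _
  | succ k ih =>
    -- step down to `ρ' = max s (ρ / M²)`, which is within one doubling step of `ρ`
    have hρ' : max s (ρ / M ^ 2) ≤ (M ^ 2) ^ k * s := by
      refine max_le (le_mul_of_one_le_left hs.le (one_le_pow₀ hM2)) ?_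
      rw [div_le_iff₀ (by positivity)]
      rw [pow_succ] at hρ
      linarith
    have hstep := hGD.withinFactor_of_le hM c (hs.trans_le (le_max_left s _))
      (max_le hsρ (div_le_self (hs.le.trans hsρ) hM2))
      ((mul_div_cancel₀ ρ (by positivity : M ^ 2 ≠ 0)).symm.le.trans
        (mul_le_mul_of_nonneg_left (le_max_right _ _) (by positivity)))
    rw [pow_succ']
    exact hstep.trans (ih (le_max_left _ _) hρ') hb (pow_nonneg hb k)

def doublingExponent (M : ℝ) : ℝ := log (1 + 1 / M) / log (M ^ 2)

theorem tendsto_doublingExponent_atTop : Tendsto doublingExponent atTop (𝓝 0) := by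
  have hlog : Tendsto (fun M : ℝ => log (1 + 1 / M)) atTop (𝓝 0) := by
    simpa [Function.comp_def] using
      (continuousAt_log one_ne_zero).tendsto.comp tendsto_one_add_one_div_atTop
  exact hlog.div_atTop (tendsto_log_atTop.comp (tendsto_pow_atTop two_ne_zero))

theorem GoodDoubling.withinFactor_rpow (hM : 1 < M) (hGD : GoodDoubling n M w)
    (hw : ∀ x, 0 ≤ w x) (c : EuclideanSpace ℝ (Fin n)) {s ρ : ℝ} (hs : 0 < s)
    (hρ : 0 < ρ) :
    WithinFactor ((1 + 1 / M) * max (ρ / s) (s / ρ) ^ doublingExponent M)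
      (normalizedBallMass w c ρ) (normalizedBallMass w c s) := by
  wlog hsρ : s ≤ ρ generalizing s ρ
  · rw [max_comm]
    exact (this hρ hs (le_of_not_ge hsρ)).symm
  have hu : 1 ≤ ρ / s := (one_le_div hs).2 hsρ
  have hmax : max (ρ / s) (s / ρ) = ρ / s :=
    max_eq_left (((div_le_one hρ).2 hsρ).trans hu)
  have hM2 : 1 < M ^ 2 := one_lt_pow₀ hM two_ne_zero
  have hρk : ρ ≤ (M ^ 2) ^ ⌈logb (M ^ 2) (ρ / s)⌉₊ * s := by
    rw [← div_le_iff₀ hs, ← rpow_natCast]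
    calc ρ / s = (M ^ 2) ^ logb (M ^ 2) (ρ / s) :=
          (rpow_logb (by positivity) hM2.ne' (by positivity)).symm
      _ ≤ _ := rpow_le_rpow_of_exponent_le hM2.le (Nat.le_ceil _)
  rw [hmax]
  exact (hGD.withinFactor_pow hM c hs _ hsρ hρk).mono
    (pow_natCeil_logb_le_mul_rpow (le_add_of_nonneg_right (by positivity)) hM2 hu)
    (normalizedBallMass_nonneg hw c hρ.le) (normalizedBallMass_nonneg hw c hs.le)

theorem GoodDoubling.withinFactor_of_dist_lt (hM : 1 < M) (hGD : GoodDoubling n M w)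
    {x y : EuclideanSpace ℝ (Fin n)} {s : ℝ} (hs : 0 < s) (hxy : dist x y < s) :
    WithinFactor (1 + 1 / M) (normalizedBallMass w x s) (normalizedBallMass w y s) := by
  have hmem : s ∈ Icc (s / M) (M * s) :=
    ⟨div_le_self hs.le hM.le, le_mul_of_one_le_left hs.le hM.le⟩
  exact hGD.withinFactor (one_pos.trans hM) hs (by rwa [mem_ball, dist_comm]) hmem hmem

theorem GoodDoubling.withinFactor_integral_ball_sqrt (hM : 1 < M) (hGD : GoodDoubling n M w)
    (hw : ∀ x, 0 ≤ w x) {x y : EuclideanSpace ℝ (Fin n)} {s t : ℝ} (hs : 0 < s)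
    (hxy : dist x y < s) (ht : 0 < t) :
    WithinFactor ((1 + 1 / M) ^ 2 * max √t (√t)⁻¹ ^ doublingExponent M)
      (∫ z in ball y (s * √t), w z) (t ^ ((n : ℝ) / 2) * ∫ z in ball x s, w z) := by
  have hst : 0 < s * √t := by positivity
  have hradius := hGD.withinFactor_rpow hM hw y hs hst
  rw [mul_div_cancel_left₀ _ hs.ne', div_mul_cancel_left₀ hs.ne'] at hradius
  have hcenter := (hGD.withinFactor_of_dist_lt hM hs hxy).symm
  have hb : 0 ≤ 1 + 1 / M := by positivity
  convert (hradius.trans hcenter (by positivity) hb).mul_right (pow_nonneg hst.le n) using 1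
  · ring
  · rw [normalizedBallMass, div_mul_cancel₀ _ (pow_pos hst n).ne']
  · rw [normalizedBallMass, mul_pow, sqrt_pow_eq_rpow ht.le, ← mul_assoc,
      div_mul_cancel₀ _ (pow_pos hs n).ne', mul_comm]

end Doubling

def weightedGammaIntegral (p δ : ℝ) : ℝ :=
  ∫ t in Ioi 0, exp (-t) * t ^ p * max √t (√t)⁻¹ ^ δ

theorem integrableOn_exp_neg_mul_rpow_mul_sqrt_add_inv {p : ℝ} (hp : -(1 / 2) < p) :
    IntegrableOn (fun t => exp (-t) * t ^ p * (√t + (√t)⁻¹)) (Ioi 0) := by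
  have hgamma (q : ℝ) (hq : 0 < q) := GammaIntegral_convergent hq
  refine ((hgamma (p + 3 / 2) (by linarith)).add (hgamma (p + 1 / 2) (by linarith))).congr_fun
    (fun t (ht : 0 < t) => ?_) measurableSet_Ioi
  rw [Pi.add_apply, sqrt_eq_rpow, ← rpow_neg ht.le, mul_add, mul_assoc, mul_assoc,
    ← rpow_add ht, ← rpow_add ht]
  ring_nf

theorem norm_weightedGammaIntegrand_le {p δ t : ℝ} (hδ : δ ≤ 1) (ht : 0 < t) :
    ‖exp (-t) * t ^ p * max √t (√t)⁻¹ ^ δ‖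
      ≤ exp (-t) * t ^ p * (√t + (√t)⁻¹) := by
  have hu := one_le_max_self_inv (sqrt_pos.2 ht)
  rw [norm_of_nonneg (by positivity)]
  gcongr
  exact (rpow_le_self_of_one_le hu hδ).trans
    (max_le_add_of_nonneg (sqrt_nonneg t) (inv_nonneg.2 (sqrt_nonneg t)))

theorem integrableOn_weightedGammaIntegrand {p δ : ℝ} (hp : -(1 / 2) < p) (hδ : δ ≤ 1) :
    IntegrableOn (fun t => exp (-t) * t ^ p * max √t (√t)⁻¹ ^ δ) (Ioi 0) :=
  (integrableOn_exp_neg_mul_rpow_mul_sqrt_add_inv hp).mono' (by fun_prop)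
    ((ae_restrict_mem measurableSet_Ioi).mono fun _ => norm_weightedGammaIntegrand_le hδ)

theorem weightedGammaIntegral_zero {p : ℝ} (hp : -1 < p) :
    weightedGammaIntegral p 0 = Gamma (p + 1) := by
  simp_rw [weightedGammaIntegral, rpow_zero, mul_one, Gamma_eq_integral (by linarith : 0 < p + 1),
    add_sub_cancel_right]

theorem continuousAt_weightedGammaIntegral {p : ℝ} (hp : -(1 / 2) < p) :
    ContinuousAt (weightedGammaIntegral p) 0 := by
  refine continuousAt_of_dominated (Eventually.of_forall fun δ => by fun_prop) ?_
    (integrableOn_exp_neg_mul_rpow_mul_sqrt_add_inv hp) ?_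
  · filter_upwards [Iic_mem_nhds one_pos] with δ (hδ : δ ≤ 1)
    exact (ae_restrict_mem measurableSet_Ioi).mono fun _ => norm_weightedGammaIntegrand_le hδ
  · filter_upwards [ae_restrict_mem measurableSet_Ioi] with t (ht : 0 < t)
    have hu := one_le_max_self_inv (sqrt_pos.2 ht)
    exact (continuousAt_const_rpow (by positivity)).const_mul _

theorem exists_doublingExponent_weightedGammaIntegral_bounds {p ε : ℝ} (hp : -(1 / 2) < p)
    (hε : 0 < ε) :
    ∃ M > 1, |doublingExponent M| ≤ 1 ∧
      (1 + 1 / M) ^ 2 * weightedGammaIntegral p (doublingExponent M)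
        ≤ (1 + ε) * Gamma (p + 1) ∧
      (1 + ε)⁻¹ * Gamma (p + 1)
        ≤ ((1 + 1 / M) ^ 2)⁻¹ * weightedGammaIntegral p (-doublingExponent M) := by
  have hΓ : 0 < Gamma (p + 1) := Gamma_pos_of_pos (by linarith)
  have hb := tendsto_one_add_one_div_atTop.pow 2
  have hW := continuousAt_weightedGammaIntegral hp
  rw [ContinuousAt, weightedGammaIntegral_zero (by linarith)] at hW
  have hδ := tendsto_doublingExponent_atTop
  have hup : Tendsto (fun M => (1 + 1 / M) ^ 2 * weightedGammaIntegral p (doublingExponent M))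
      atTop (𝓝 (Gamma (p + 1))) := by
    simpa using hb.mul (hW.comp hδ)
  have hlo : Tendsto
      (fun M => ((1 + 1 / M) ^ 2)⁻¹ * weightedGammaIntegral p (-doublingExponent M))
      atTop (𝓝 (Gamma (p + 1))) := by
    simpa using (hb.inv₀ (by norm_num)).mul (hW.comp (by simpa using hδ.neg))
  have hδabs : Tendsto (fun M => |doublingExponent M|) atTop (𝓝 0) := by simpa using hδ.abs
  have hε' : (1 + ε)⁻¹ < 1 := inv_lt_one_of_one_lt₀ (by linarith)
  obtain ⟨M, hM, hδM, hupM, hloM⟩ := ((eventually_gt_atTop 1).and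
    ((hδabs.eventually_lt_const one_pos).and
    ((hup.eventually_lt_const (show Gamma (p + 1) < (1 + ε) * Gamma (p + 1) by nlinarith)).and
    (hlo.eventually_const_lt (show (1 + ε)⁻¹ * Gamma (p + 1) < Gamma (p + 1) by nlinarith)))))
    |>.exists
  exact ⟨M, hM, hδM.le, hupM.le, hloM.le⟩

theorem lintegral_exp_neg_eq_lintegral_measure_lt {X : Type*} [MeasurableSpace X]
    (μ : Measure X) [SFinite μ] {a : X → ℝ} (ha : Measurable a) (ha0 : ∀ x, 0 ≤ a x) :
    ∫⁻ x, ENNReal.ofReal (exp (-a x)) ∂μ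
      = ∫⁻ t in Ioi 0, ENNReal.ofReal (exp (-t)) * μ {x | a x < t} := by
  set g : ℝ → ℝ≥0∞ := fun t => ENNReal.ofReal (exp (-t))
  have hg : Measurable g := by fun_prop
  have hexp (x : X) :
      ENNReal.ofReal (exp (-a x)) = ∫⁻ t in Ioi 0, (Ioi (a x)).indicator g t := by
    rw [setLIntegral_indicator measurableSet_Ioi, Ioi_inter_Ioi, max_eq_left (ha0 x),
      ← ofReal_integral_eq_lintegral_ofReal (integrableOn_exp_neg_Ioi (a x))
        (ae_of_all _ fun t => (exp_pos _).le), integral_exp_neg_Ioi]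
  calc ∫⁻ x, ENNReal.ofReal (exp (-a x)) ∂μ
      = ∫⁻ x, (∫⁻ t in Ioi 0, (Ioi (a x)).indicator g t) ∂μ := lintegral_congr hexp
    _ = ∫⁻ t in Ioi 0, ∫⁻ x, (Ioi (a x)).indicator g t ∂μ := by
      refine lintegral_lintegral_swap (Measurable.aemeasurable ?_)
      simp only [Function.uncurry_def, indicator_apply, mem_Ioi]
      exact Measurable.ite (measurableSet_lt (ha.comp measurable_fst) measurable_snd)
        (hg.comp measurable_snd) measurable_const
    _ = ∫⁻ t in Ioi 0, g t * μ {x | a x < t} := by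
      refine lintegral_congr fun t => ?_
      rw [← lintegral_indicator_const (measurableSet_lt ha measurable_const)]
      simp only [indicator_apply, mem_Ioi, mem_ofPred_eq]

theorem setOf_sq_norm_inv_smul_sub_lt {E : Type*} [NormedAddCommGroup E] [NormedSpace ℝ E]
    (y : E) {s : ℝ} (hs : 0 < s) (t : ℝ) :
    {z : E | ‖s⁻¹ • (y - z)‖ ^ 2 < t} = ball y (s * √t) := by
  ext z
  rw [mem_ofPred_eq, ← lt_sqrt (norm_nonneg _), norm_smul, norm_inv, norm_of_nonneg hs.le,
    inv_mul_lt_iff₀ hs, mem_ball, dist_eq_norm, norm_sub_rev]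

theorem integral_le_toReal_lintegral_ofReal_le {α : Type*} [MeasurableSpace α] {μ : Measure α}
    {f g h : α → ℝ} (hg : Integrable g μ) (hh : Integrable h μ) (hg0 : 0 ≤ᵐ[μ] g)
    (hgf : g ≤ᵐ[μ] f) (hfh : f ≤ᵐ[μ] h) :
    ∫ x, g x ∂μ ≤ (∫⁻ x, ENNReal.ofReal (f x) ∂μ).toReal ∧
      (∫⁻ x, ENNReal.ofReal (f x) ∂μ).toReal ≤ ∫ x, h x ∂μ := by
  have hh0 : 0 ≤ᵐ[μ] h := by
    filter_upwards [hg0, hgf, hfh] with x h1 h2 h3 using h1.trans (h2.trans h3)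
  have hfh' : ∫⁻ x, ENNReal.ofReal (f x) ∂μ ≤ ∫⁻ x, ENNReal.ofReal (h x) ∂μ :=
    lintegral_mono_ae (hfh.mono fun x hx => ENNReal.ofReal_le_ofReal hx)
  have hfin : ∫⁻ x, ENNReal.ofReal (h x) ∂μ ≠ ⊤ := hh.lintegral_lt_top.ne
  rw [integral_eq_lintegral_of_nonneg_ae hg0 hg.1, integral_eq_lintegral_of_nonneg_ae hh0 hh.1]
  exact ⟨ENNReal.toReal_mono (ne_top_of_le_ne_top hfin hfh')
    (lintegral_mono_ae (hgf.mono fun x hx => ENNReal.ofReal_le_ofReal hx)),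
    ENNReal.toReal_mono hfin hfh'⟩

section Heat

variable {n : ℕ} {w : EuclideanSpace ℝ (Fin n) → ℝ}

theorem heatConv_eq_toReal_lintegral (hw : ∀ x, 0 ≤ w x)
    (hwm : AEStronglyMeasurable w) (y : EuclideanSpace ℝ (Fin n)) {s : ℝ} (hs : 0 < s) :
    heatConv n w s y = (s ^ n)⁻¹ * π ^ (-(n : ℝ) / 2) *
      (∫⁻ t in Ioi 0, ENNReal.ofReal (exp (-t)) *
        ∫⁻ z in ball y (s * √t), ENNReal.ofReal (w z)).toReal := by
  set c : ℝ := (s ^ n)⁻¹ * π ^ (-(n : ℝ) / 2)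
  have hc : 0 ≤ c := by positivity
  set a : EuclideanSpace ℝ (Fin n) → ℝ := fun z => ‖s⁻¹ • (y - z)‖ ^ 2
  have hintegrand (z : EuclideanSpace ℝ (Fin n)) :
      ENNReal.ofReal ((s ^ n)⁻¹ * gauss n (s⁻¹ • (y - z)) * w z)
        = ENNReal.ofReal c * (ENNReal.ofReal (w z) * ENNReal.ofReal (exp (-a z))) := by
    rw [← ENNReal.ofReal_mul (hw z), ← ENNReal.ofReal_mul hc, gauss]
    simp only [c, a]
    ring_nf
  have hcont : Continuous fun z => (s ^ n)⁻¹ * gauss n (s⁻¹ • (y - z)) := by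
    unfold gauss; fun_prop
  have hdensity : ∫⁻ z, ENNReal.ofReal (w z) * ENNReal.ofReal (exp (-a z))
      = ∫⁻ z, ENNReal.ofReal (exp (-a z)) ∂volume.withDensity fun z => ENNReal.ofReal (w z) :=
    (lintegral_withDensity_eq_lintegral_mul_non_measurable₀ _ hwm.aemeasurable.ennreal_ofReal
      (ae_of_all _ fun _ => ENNReal.ofReal_lt_top) _).symm
  rw [heatConv, integral_eq_lintegral_of_nonneg_ae
      (ae_of_all _ fun z => mul_nonneg (by unfold gauss; positivity) (hw z))
      (hcont.aestronglyMeasurable.mul hwm),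
    lintegral_congr hintegrand, lintegral_const_mul' _ _ ENNReal.ofReal_ne_top,
    hdensity,
    lintegral_exp_neg_eq_lintegral_measure_lt _ (by fun_prop) (fun z => sq_nonneg _),
    ENNReal.toReal_mul, ENNReal.toReal_ofReal hc]
  simp_rw [setOf_sq_norm_inv_smul_sub_lt y hs, withDensity_apply _ measurableSet_ball]

theorem heatConv_bounds_of_withinFactor (hw : ∀ x, 0 ≤ w x)
    (hwloc : LocallyIntegrable w) (y : EuclideanSpace ℝ (Fin n)) {s A c δ : ℝ} (hs : 0 < s)
    (hA : 0 ≤ A) (hc : 0 < c) (hδ : |δ| ≤ 1)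
    (hcmp : ∀ t > 0, WithinFactor (c * max √t (√t)⁻¹ ^ δ)
      (∫ z in ball y (s * √t), w z) (t ^ ((n : ℝ) / 2) * A)) :
    c⁻¹ * weightedGammaIntegral (n / 2) (-δ) * A ≤ √π ^ n * s ^ n * heatConv n w s y ∧
      √π ^ n * s ^ n * heatConv n w s y ≤ c * weightedGammaIntegral (n / 2) δ * A := by
  have hp : -(1 / 2) < (n : ℝ) / 2 := by have := n.cast_nonneg (α := ℝ); linarith
  have hu {t : ℝ} (ht : 0 < t) : 0 < max √t (√t)⁻¹ :=
    one_pos.trans_le (one_le_max_self_inv (sqrt_pos.2 ht))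
  have hball (t : ℝ) : ∫⁻ z in ball y (s * √t), ENNReal.ofReal (w z)
      = ENNReal.ofReal (∫ z in ball y (s * √t), w z) :=
    (ofReal_integral_eq_lintegral_ofReal
      ((hwloc.integrableOn_isCompact (isCompact_closedBall _ _)).mono_set ball_subset_closedBall)
      (ae_of_all _ fun z => hw z)).symm
  have hscale : √π ^ n * s ^ n * ((s ^ n)⁻¹ * π ^ (-(n : ℝ) / 2)) = 1 := by
    rw [pi_rpow_neg_natCast_div_two]
    field_simp
  rw [heatConv_eq_toReal_lintegral hw hwloc.aestronglyMeasurable y hs, ← mul_assoc, hscale,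
    one_mul]
  simp_rw [hball, ← ENNReal.ofReal_mul (exp_pos _).le]
  obtain ⟨hδlo, hδhi⟩ := abs_le.1 hδ
  have key := integral_le_toReal_lintegral_ofReal_le
    (f := fun t => exp (-t) * ∫ z in ball y (s * √t), w z)
    ((integrableOn_weightedGammaIntegrand hp (by linarith : -δ ≤ 1)).const_mul (c⁻¹ * A))
    ((integrableOn_weightedGammaIntegrand hp hδhi).const_mul (c * A))
    ?_ ?_ ?_
  · simp only [integral_const_mul] at key
    exact ⟨le_of_eq_of_le (by rw [weightedGammaIntegral]; ring) key.1,
      key.2.trans_eq (by rw [weightedGammaIntegral]; ring)⟩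
  all_goals filter_upwards [ae_restrict_mem measurableSet_Ioi] with t (ht : 0 < t)
  · have := hu ht
    positivity
  · calc c⁻¹ * A * (exp (-t) * t ^ ((n : ℝ) / 2) * max √t (√t)⁻¹ ^ (-δ))
        = exp (-t) * ((c * max √t (√t)⁻¹ ^ δ)⁻¹ * (t ^ ((n : ℝ) / 2) * A)) := by
          rw [rpow_neg (hu ht).le, mul_inv]
          ring
      _ ≤ exp (-t) * ∫ z in ball y (s * √t), w z := by
          gcongr
          exact (hcmp t ht).inv_mul_le (by have := hu ht; positivity)
  · calc exp (-t) * ∫ z in ball y (s * √t), w z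
        ≤ exp (-t) * (c * max √t (√t)⁻¹ ^ δ * (t ^ ((n : ℝ) / 2) * A)) := by
          gcongr
          exact (hcmp t ht).1
      _ = c * A * (exp (-t) * t ^ ((n : ℝ) / 2) * max √t (√t)⁻¹ ^ δ) := by ring

end Heat

theorem toReal_volume_ball_zero_one (n : ℕ) :
    (volume (ball (0 : EuclideanSpace ℝ (Fin n)) 1)).toReal = √π ^ n / Gamma (n / 2 + 1) := by
  rcases Nat.eq_zero_or_pos n with rfl | hn
  · have huniv : ball (0 : EuclideanSpace ℝ (Fin 0)) 1 = univ :=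
      eq_univ_of_forall fun z => by simp [Subsingleton.elim z 0]
    rw [huniv, ← (PiLp.volume_preserving_toLp (Fin 0)).measure_preimage
      MeasurableSet.univ.nullMeasurableSet, preimage_univ, volume_pi, Measure.pi_univ]
    simp
  · have : Nonempty (Fin n) := ⟨⟨0, hn⟩⟩
    rw [EuclideanSpace.volume_ball, Fintype.card_fin, ENNReal.ofReal_one, one_pow, one_mul,
      ENNReal.toReal_ofReal (by positivity)]

/-- For every `ε ∈ (0,1)` and dimension `n` there exists `M > 1` such that
for every weight `w` with the `M`-good doubling property, for all `s > 0` and `|x−y| < s`,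
`(1+ε)⁻¹ ≤ (φ_s ∗ w)(y)/(χ̃_s ∗ w)(x) ≤ 1+ε`, where
`(χ̃_s ∗ w)(x) = (sⁿ|B(0,1)|)⁻¹ w(B(x,s))` (stated in multiplied-out form). -/
theorem heat_vs_normalized_average (n : ℕ) (ε : ℝ) (hε : ε ∈ Set.Ioo (0:ℝ) 1) :
    ∃ M > (1:ℝ), ∀ w : EuclideanSpace ℝ (Fin n) → ℝ,
      (∀ x, 0 ≤ w x) → MeasureTheory.LocallyIntegrable w → GoodDoubling n M w →
      ∀ (s : ℝ) (x y : EuclideanSpace ℝ (Fin n)), 0 < s → dist x y < s →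
        (1+ε)⁻¹ * ((s^n * (MeasureTheory.volume
            (Metric.ball (0 : EuclideanSpace ℝ (Fin n)) 1)).toReal)⁻¹ *
              ∫ z in Metric.ball x s, w z)
          ≤ heatConv n w s y ∧
        heatConv n w s y
          ≤ (1+ε) * ((s^n * (MeasureTheory.volume
            (Metric.ball (0 : EuclideanSpace ℝ (Fin n)) 1)).toReal)⁻¹ *
              ∫ z in Metric.ball x s, w z) := by
  have hp : -(1 / 2) < (n : ℝ) / 2 := by have := n.cast_nonneg (α := ℝ); linarith
  obtain ⟨M, hM, hδ, hup, hlo⟩ := exists_doublingExponent_weightedGammaIntegral_bounds hp hε.1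
  refine ⟨M, hM, fun w hw hwloc hGD s x y hs hxy => ?_⟩
  set A := ∫ z in ball x s, w z
  set Γ := Gamma ((n : ℝ) / 2 + 1)
  have hA : 0 ≤ A := setIntegral_nonneg measurableSet_ball fun z _ => hw z
  obtain ⟨hheat_lo, hheat_hi⟩ := heatConv_bounds_of_withinFactor hw hwloc y hs hA
    (by positivity) hδ fun t ht => hGD.withinFactor_integral_ball_sqrt hM hw hs hxy ht
  set K := √π ^ n * s ^ n with hK_def
  have hK : 0 < K := by positivity
  have hΓ : 0 < Γ := Gamma_pos_of_pos (by linarith)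
  rw [toReal_volume_ball_zero_one, show (s ^ n * (√π ^ n / Γ))⁻¹ = Γ / K by
    rw [hK_def]; field_simp]
  constructor
  · calc (1 + ε)⁻¹ * (Γ / K * A) = (1 + ε)⁻¹ * Γ * A / K := by ring
      _ ≤ ((1 + 1 / M) ^ 2)⁻¹ * weightedGammaIntegral (n / 2) (-doublingExponent M) * A / K := by
          gcongr
      _ ≤ heatConv n w s y := by rwa [div_le_iff₀' hK]
  · calc heatConv n w s y
        ≤ (1 + 1 / M) ^ 2 * weightedGammaIntegral (n / 2) (doublingExponent M) * A / K := by
          rwa [le_div_iff₀' hK]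
      _ ≤ (1 + ε) * Γ * A / K := by gcongr
      _ = (1 + ε) * (Γ / K * A) := by ring
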